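/- Define w : ℕ × ℕ → Bool by: w(0,0) = false, and for (a,b) ≠ (0,0), w(a,b) = true iff some legal move leads to a position (a',b') with w(a',b') = false. Let φ = (1+√5)/2. Then for all non-negative integers k ≤ n with (k,n) ≠ (0,0): w(k,n) = true if and only if NOT (n/φ < k and n < φ·k), i.e. w(k,n) = false iff k/φ < n < φ·k. -/

import Mathlib

noncomputable def phi : ℝ := (1 + Real.sqrt 5) / 2

/-- A legal move in the two-heaps game: from `p = (a, b)` one removes a positive
number of tokens that is a (positive) multiple of `a` or of `b` from one of the heaps. -/
def Move (p q : ℕ × ℕ) : Prop :=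
  ∃ m : ℕ, 0 < m ∧
    ((0 < m * p.1 ∧ m * p.1 ≤ p.1 ∧ q = (p.1 - m * p.1, p.2)) ∨
     (0 < m * p.1 ∧ m * p.1 ≤ p.2 ∧ q = (p.1, p.2 - m * p.1)) ∨
     (0 < m * p.2 ∧ m * p.2 ≤ p.1 ∧ q = (p.1 - m * p.2, p.2)) ∨
     (0 < m * p.2 ∧ m * p.2 ≤ p.2 ∧ q = (p.1, p.2 - m * p.2)))

theorem Move.sum_lt {p q : ℕ × ℕ} (h : Move p q) : q.1 + q.2 < p.1 + p.2 := by
  obtain ⟨m, hm, h⟩ := h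
  rcases h with ⟨h1, h2, rfl⟩ | ⟨h1, h2, rfl⟩ | ⟨h1, h2, rfl⟩ | ⟨h1, h2, rfl⟩ <;> dsimp only <;> omega

/-- `Win p` holds iff the player to move from `p` wins: there is a legal move to a
position from which the player to move loses.  In particular `Win (0,0)` is false. -/
def Win (p : ℕ × ℕ) : Prop :=
  ∃ q, ∃ _ : Move p q, ¬ Win q
termination_by p.1 + p.2
decreasing_by exact Move.sum_lt ‹Move _ _›

/-! The losing positions are `(0, 0)` and the pairs with each heap less than `φ` times the
other. From such a pair every move either empties one heap, leaving the other nonempty, or takes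
at least `a` from a heap `b < φ a`, leaving less than `φ a - a = a / φ`. Conversely, if `φ a ≤ b`,
the open interval `(a / φ, φ a)` has length `a` and irrational endpoints, so it contains a heap
size congruent to `b` modulo `a`, to which the heap `b` can be reduced. -/

lemma phi_eq_goldenRatio : phi = Real.goldenRatio := rfl

lemma phi_pos : 0 < phi := Real.goldenRatio_pos

lemma one_lt_phi : 1 < phi := Real.one_lt_goldenRatio

lemma phi_sq : phi ^ 2 = phi + 1 := Real.goldenRatio_sq

lemma phi_mul_sub_lt {x y z : ℝ} (hy : y < phi * x) (hz : x ≤ z) : phi * (y - z) < x :=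
  calc phi * (y - z) ≤ phi * (y - x) := by gcongr; exact phi_pos.le
    _ < phi * (phi * x - x) := by gcongr; exact phi_pos
    _ = x := by linear_combination x * phi_sq

lemma inv_phi : phi⁻¹ = phi - 1 := by
  rw [phi_eq_goldenRatio, Real.inv_goldenRatio, ← Real.one_sub_goldenConj]
  ring

lemma div_phi_add_self (x : ℝ) : x / phi + x = phi * x := by
  rw [div_eq_mul_inv, inv_phi]
  ring

lemma floor_div_phi_lt {a : ℕ} (ha : 0 < a) : (⌊(a : ℝ) / phi⌋₊ : ℝ) < a / phi :=
  (Nat.floor_le (by positivity [phi_pos])).lt_of_ne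
    ((Real.goldenRatio_irrational.natCast_div ha.ne').ne_nat _).symm

lemma Nat.exists_add_mul_eq_of_lt {a b t : ℕ} (ha : 0 < a) (htb : t < b) :
    ∃ m c, c + m * a = b ∧ t < c ∧ c ≤ t + a := by
  refine ⟨(b - (t + 1)) / a, t + 1 + (b - (t + 1)) % a, ?_, by omega, ?_⟩
  · have := Nat.mod_add_div' (b - (t + 1)) a
    omega
  · have := Nat.mod_lt (b - (t + 1)) ha
    omega

def GoldenZone (p : ℕ × ℕ) : Prop :=
  (p.1 : ℝ) < phi * p.2 ∧ (p.2 : ℝ) < phi * p.1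

lemma GoldenZone.swap {a b : ℕ} (h : GoldenZone (a, b)) : GoldenZone (b, a) := h.symm

lemma GoldenZone.pos {p : ℕ × ℕ} (h : GoldenZone p) : 0 < p.1 ∧ 0 < p.2 := by
  have h₁ : (0 : ℝ) < phi * p.1 := lt_of_le_of_lt (Nat.cast_nonneg _) h.2
  have h₂ : (0 : ℝ) < phi * p.2 := lt_of_le_of_lt (Nat.cast_nonneg _) h.1
  exact ⟨Nat.cast_pos.1 (pos_of_mul_pos_right h₁ phi_pos.le),
    Nat.cast_pos.1 (pos_of_mul_pos_right h₂ phi_pos.le)⟩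

lemma not_goldenZone_sub {a b c : ℕ} (hb : (b : ℝ) < phi * a) (hac : a ≤ c) (hcb : c ≤ b) :
    ¬ GoldenZone (a, b - c) := by
  rintro ⟨ha, -⟩
  have : phi * ((b - c : ℕ) : ℝ) < a := by
    rw [Nat.cast_sub hcb]
    exact phi_mul_sub_lt hb (by exact_mod_cast hac)
  exact ha.not_gt this

lemma exists_sub_mul_mem_goldenZone {a b : ℕ} (ha : 0 < a) (hb : phi * a ≤ b) :
    ∃ m, 0 < m ∧ m * a ≤ b ∧ GoldenZone (a, b - m * a) := by
  set t := ⌊(a : ℝ) / phi⌋₊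
  have ht : (t : ℝ) + a < phi * a := by
    rw [← div_phi_add_self]
    linarith [floor_div_phi_lt ha]
  have htb : t < b := by
    have : (t : ℝ) < b := by linarith [(Nat.cast_nonneg a : (0 : ℝ) ≤ a)]
    exact_mod_cast this
  obtain ⟨m, c, rfl, htc, hct⟩ := Nat.exists_add_mul_eq_of_lt ha htb
  have hc : (c : ℝ) < phi * a := by
    have : (c : ℝ) ≤ t + a := by exact_mod_cast hct
    linarith
  refine ⟨m, Nat.pos_of_ne_zero ?_, by omega, ?_⟩
  · rintro rfl
    push_cast at hb
    linarith
  · rw [Nat.add_sub_cancel]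
    refine ⟨?_, hc⟩
    have : (a : ℝ) / phi < c := (Nat.lt_floor_add_one _).trans_le (by exact_mod_cast htc)
    rwa [div_lt_iff₀ phi_pos, mul_comm] at this

lemma win_iff_exists_move (p : ℕ × ℕ) : Win p ↔ ∃ q, Move p q ∧ ¬ Win q := by
  rw [Win]
  simp only [exists_prop]

lemma not_move_zero (q : ℕ × ℕ) : ¬ Move (0, 0) q := fun h => by
  have := h.sum_lt
  omega

lemma move_fst_zero {a : ℕ} (ha : 0 < a) : Move (a, 0) (0, 0) :=
  ⟨1, one_pos, Or.inl ⟨by simpa, by simp, by simp⟩⟩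

lemma move_snd_zero {b : ℕ} (hb : 0 < b) : Move (0, b) (0, 0) :=
  ⟨1, one_pos, Or.inr <| Or.inr <| Or.inr ⟨by simpa, by simp, by simp⟩⟩

lemma Move.sub_fst {a b m : ℕ} (hm : 0 < m) (hb : 0 < b) (h : m * b ≤ a) :
    Move (a, b) (a - m * b, b) :=
  ⟨m, hm, Or.inr <| Or.inr <| Or.inl ⟨by positivity, h, rfl⟩⟩

lemma Move.sub_snd {a b m : ℕ} (hm : 0 < m) (ha : 0 < a) (h : m * a ≤ b) :
    Move (a, b) (a, b - m * a) :=
  ⟨m, hm, Or.inr <| Or.inl ⟨by positivity, h, rfl⟩⟩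

lemma GoldenZone.not_zero_or_goldenZone_of_move {p q : ℕ × ℕ} (hp : GoldenZone p)
    (hmove : Move p q) : ¬ (q = (0, 0) ∨ GoldenZone q) := by
  obtain ⟨a, b⟩ := p
  obtain ⟨ha, hb⟩ := hp.pos
  obtain ⟨m, hm, ⟨-, h, rfl⟩ | ⟨-, h, rfl⟩ | ⟨-, h, rfl⟩ | ⟨-, h, rfl⟩⟩ := hmove
  all_goals
    dsimp only at ha hb h ⊢
    have := Nat.le_mul_of_pos_left a hm
    have := Nat.le_mul_of_pos_left b hm
    rintro (hq | hq)
    · simp only [Prod.mk.injEq] at hq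
      omega
  · have : 0 < a - m * a := hq.pos.1
    omega
  · exact not_goldenZone_sub hp.2 ‹_› h hq
  · exact not_goldenZone_sub hp.1 ‹_› h hq.swap
  · have : 0 < b - m * b := hq.pos.2
    omega

lemma exists_move_to_zero_or_goldenZone {p : ℕ × ℕ} (hp : p ≠ (0, 0)) (hg : ¬ GoldenZone p) :
    ∃ q, Move p q ∧ (q = (0, 0) ∨ GoldenZone q) := by
  obtain ⟨a, b⟩ := p
  rcases Nat.eq_zero_or_pos a with rfl | ha
  · exact ⟨_, move_snd_zero (Nat.pos_of_ne_zero fun hb => hp (by rw [hb])), Or.inl rfl⟩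
  rcases Nat.eq_zero_or_pos b with rfl | hb
  · exact ⟨_, move_fst_zero ha, Or.inl rfl⟩
  rcases not_and_or.1 hg with h | h <;> rw [not_lt] at h
  · obtain ⟨m, hm, hmb, hz⟩ := exists_sub_mul_mem_goldenZone hb h
    exact ⟨_, Move.sub_fst hm hb hmb, Or.inr hz.swap⟩
  · obtain ⟨m, hm, hma, hz⟩ := exists_sub_mul_mem_goldenZone ha h
    exact ⟨_, Move.sub_snd hm ha hma, Or.inr hz⟩

theorem win_iff_not_zero_or_goldenZone (p : ℕ × ℕ) :
    Win p ↔ ¬ (p = (0, 0) ∨ GoldenZone p) := by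
  have h_lose : ∀ q, Move p q → (¬ Win q ↔ q = (0, 0) ∨ GoldenZone q) := fun q _ => by
    rw [win_iff_not_zero_or_goldenZone q, not_not]
  rw [win_iff_exists_move]
  constructor
  · rintro ⟨q, hq, hwin⟩ (rfl | hp)
    · exact not_move_zero q hq
    · exact hp.not_zero_or_goldenZone_of_move hq ((h_lose q hq).1 hwin)
  · intro hp
    rw [not_or] at hp
    obtain ⟨q, hq, hl⟩ := exists_move_to_zero_or_goldenZone hp.1 hp.2
    exact ⟨q, hq, (h_lose q hq).2 hl⟩
termination_by p.1 + p.2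
decreasing_by exact Move.sum_lt ‹Move _ _›

theorem win_iff_not_golden_zone (k n : ℕ) (hkn : k ≤ n) (hne : (k, n) ≠ (0, 0)) :
    Win (k, n) ↔ ¬ ((n : ℝ) / phi < (k : ℝ) ∧ (n : ℝ) < phi * k) := by
  have hn : (0 : ℝ) < n :=
    Nat.cast_pos.2 <| Nat.pos_of_ne_zero fun h => hne (by subst h; rw [Nat.le_zero.1 hkn])
  have hk : (k : ℝ) < phi * n :=
    (Nat.cast_le.2 hkn).trans_lt (lt_mul_of_one_lt_left hn one_lt_phi)
  rw [win_iff_not_zero_or_goldenZone, or_iff_right hne, GoldenZone, div_lt_iff₀ phi_pos,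
    mul_comm (k : ℝ)]
  simp only [hk, true_and, and_self]
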